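/- The entries of the matrix P = U* Q U (with U the 2n-point discrete Fourier transform and Q the projection onto the first n coordinates) are P(k,l) = 1/2 if k = l; 0 if k ≠ l and k−l is even; and (1/n)·1/(1 − exp(−2πi(k−l)/(2n))) if k−l is odd. Moreover |P(k,l)| ≤ C·min(|k−l|, 2n−|k−l|)^{−1} for k ≠ l for some absolute constant C. -/

import Mathlib

open Matrix Complex Real

/-- The `2n`-point discrete Fourier transform matrix. -/
noncomputable def dftU (n : ℕ) : Matrix (Fin (2 * n)) (Fin (2 * n)) ℂ :=
  fun j k => ((1 / Real.sqrt (2 * n) : ℝ) : ℂ) *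
    Complex.exp (2 * Real.pi * Complex.I * (j : ℕ) * (k : ℕ) / (2 * n))

/-- The diagonal projection onto the first `n` coordinates. -/
def Qproj (n : ℕ) : Matrix (Fin (2 * n)) (Fin (2 * n)) ℂ :=
  Matrix.diagonal (fun i => if (i : ℕ) < n then (1 : ℂ) else 0)

/-- `P = U* Q U`. -/
noncomputable def Pmat (n : ℕ) : Matrix (Fin (2 * n)) (Fin (2 * n)) ℂ :=
  (dftU n)ᴴ * Qproj n * dftU n

/-!
The `(k, l)` entry of `U* Q U` is `(2n)⁻¹ ∑_{j<n} z^j` with `z = ω^(l-k)`, where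
`ω = exp(2πi/(2n))` is a primitive `2n`-th root of unity. Since `ω^n = -1` we get
`z^n = (-1)^(l-k)`, so for `k ≠ l` the geometric sum is `0` or `2/(1-z)` according to the
parity of `l - k`. For the decay, `‖1 - z‖ = 2|sin(π(k-l)/(2n))|`; folding `|k-l|` into
`m = min(|k-l|, 2n-|k-l|)` and applying Jordan's inequality `sin x ≥ 2x/π` on `[0, π/2]`
gives `|P(k,l)| ≤ 1/(2m)`.
-/

namespace IsPrimitiveRoot

variable {K : Type*} [Field K] {ζ : K} {n : ℕ}

theorem pow_eq_neg_one_of_two_mul (hζ : IsPrimitiveRoot ζ (2 * n)) (hn : n ≠ 0) :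
    ζ ^ n = -1 :=
  (hζ.pow (by omega) (mul_comm 2 n)).eq_neg_one_of_two_right

theorem geom_sum_zpow_of_two_mul (hζ : IsPrimitiveRoot ζ (2 * n)) (hn : n ≠ 0) {d : ℤ}
    (hd : ¬ (2 * n : ℤ) ∣ d) :
    ∑ j ∈ Finset.range n, (ζ ^ d) ^ j = if Even d then 0 else 2 / (1 - ζ ^ d) := by
  have hne : ζ ^ d ≠ 1 := by
    rw [Ne, hζ.zpow_eq_one_iff_dvd]
    exact_mod_cast hd
  have hpow : (ζ ^ d) ^ n = (-1) ^ d := by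
    rw [← zpow_natCast, ← _root_.zpow_mul, mul_comm, _root_.zpow_mul, zpow_natCast,
      hζ.pow_eq_neg_one_of_two_mul hn]
  rw [geom_sum_eq hne, hpow]
  split_ifs with heven
  · simp [heven.neg_one_zpow]
  · rw [(Int.not_even_iff_odd.mp heven).neg_one_zpow]
    field_simp
    ring

end IsPrimitiveRoot

theorem Complex.norm_one_sub_exp_two_pi_I_mul (t : ℝ) :
    ‖1 - exp (2 * π * I * t)‖ = 2 * |Real.sin (π * t)| := by
  have h := norm_exp_I_mul_ofReal_sub_one (2 * π * t)
  rw [norm_sub_rev, show I * ((2 * π * t : ℝ) : ℂ) = 2 * π * I * t by push_cast; ring] at h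
  rw [h, show 2 * π * t / 2 = π * t by ring, norm_mul, Real.norm_two, Real.norm_eq_abs]

theorem Real.two_mul_div_le_sin_pi_mul_div {m N : ℕ} (h : 2 * m ≤ N) :
    2 * m / N ≤ Real.sin (π * m / N) := by
  rcases Nat.eq_zero_or_pos N with rfl | hN
  · simp
  have hN' : (0 : ℝ) < N := by exact_mod_cast hN
  have hle : π * m / N ≤ π / 2 := by
    rw [div_le_div_iff₀ hN' two_pos]
    have : (2 * m : ℝ) ≤ N := by exact_mod_cast h
    nlinarith [Real.pi_pos]
  calc (2 * m / N : ℝ) = 2 / π * (π * m / N) := by field_simp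
    _ ≤ Real.sin (π * m / N) := Real.mul_le_sin (by positivity) hle

theorem Real.two_mul_min_div_le_abs_sin {N : ℕ} {d : ℤ} (hd : d.natAbs ≤ N) :
    2 * (min d.natAbs (N - d.natAbs) : ℕ) / N ≤ |Real.sin (π * d / N)| := by
  set a := d.natAbs
  have hfold : Real.sin (π * a / N) = Real.sin (π * (min a (N - a) : ℕ) / N) := by
    rcases le_total a (N - a) with h | h
    · rw [min_eq_left h]
    · rw [min_eq_right h, Nat.cast_sub hd, ← Real.sin_pi_sub]
      rcases Nat.eq_zero_or_pos N with rfl | hN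
      · simp_all
      · field_simp
  have hjordan := Real.two_mul_div_le_sin_pi_mul_div (m := min a (N - a)) (N := N) (by omega)
  have habs : |Real.sin (π * d / N)| = |Real.sin (π * a / N)| := by
    rw [show (a : ℝ) = |(d : ℝ)| by simp [a]]
    rcases abs_choice (d : ℝ) with h | h <;> rw [h]
    rw [mul_neg, neg_div, Real.sin_neg, abs_neg]
  rw [habs, hfold, abs_of_nonneg (le_trans (by positivity) hjordan)]
  exact hjordan

noncomputable def dftRoot (n : ℕ) : ℂ := exp (2 * π * I / (2 * n))

theorem isPrimitiveRoot_dftRoot {n : ℕ} (hn : n ≠ 0) : IsPrimitiveRoot (dftRoot n) (2 * n) := by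
  have := Complex.isPrimitiveRoot_exp (2 * n) (by omega)
  rwa [Nat.cast_mul, Nat.cast_ofNat] at this

theorem dftRoot_zpow (n : ℕ) (d : ℤ) : dftRoot n ^ d = exp (2 * π * I * d / (2 * n)) := by
  rw [dftRoot, ← exp_int_mul]
  ring_nf

theorem star_dftU_mul_dftU (n : ℕ) (j k l : Fin (2 * n)) :
    star (dftU n j k) * dftU n j l = (2 * n : ℂ)⁻¹ * (dftRoot n ^ ((l : ℤ) - k)) ^ (j : ℕ) := by
  have hsqrt : ((1 / √(2 * n) : ℝ) : ℂ) * ((1 / √(2 * n) : ℝ) : ℂ) = (2 * n : ℂ)⁻¹ := by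
    rw [← ofReal_mul, div_mul_div_comm, one_mul, Real.mul_self_sqrt (by positivity)]
    push_cast
    ring
  simp only [dftU, star_mul', RCLike.star_def, conj_ofReal, ← exp_conj, map_div₀, map_mul,
    conj_I, map_natCast, map_ofNat]
  rw [mul_mul_mul_comm, hsqrt, ← Complex.exp_add, dftRoot_zpow, ← Complex.exp_nat_mul]
  congr 2
  push_cast
  ring

theorem Pmat_apply_eq_geom_sum (n : ℕ) (k l : Fin (2 * n)) :
    Pmat n k l = (2 * n : ℂ)⁻¹ * ∑ j ∈ Finset.range n, (dftRoot n ^ ((l : ℤ) - k)) ^ j := by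
  have hterm (j : Fin (2 * n)) : star (dftU n j k) * (if (j : ℕ) < n then 1 else 0) * dftU n j l
      = if (j : ℕ) < n then (2 * n : ℂ)⁻¹ * (dftRoot n ^ ((l : ℤ) - k)) ^ (j : ℕ) else 0 := by
    split_ifs
    · rw [mul_one, star_dftU_mul_dftU]
    · rw [mul_zero, zero_mul]
  rw [Pmat, Matrix.mul_apply]
  simp only [Qproj, Matrix.mul_diagonal, Matrix.conjTranspose_apply, hterm]
  set z := dftRoot n ^ ((l : ℤ) - k)
  rw [Fin.sum_univ_eq_sum_range (fun j => if j < n then (2 * n : ℂ)⁻¹ * z ^ j else 0),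
    ← Finset.sum_filter, Finset.mul_sum]
  congr 1
  ext j
  simp only [Finset.mem_filter, Finset.mem_range]
  omega

theorem Pmat_apply (n : ℕ) (k l : Fin (2 * n)) :
    Pmat n k l =
      if k = l then (1 / 2 : ℂ)
      else if Even ((k : ℤ) - (l : ℤ)) then 0
      else (1 / (n : ℂ)) *
        (1 - Complex.exp (-(2 * Real.pi * Complex.I * (((k : ℤ) - (l : ℤ)) : ℤ)) / (2 * n)))⁻¹ := by
  have hn : n ≠ 0 := by rintro rfl; exact k.elim0
  rw [Pmat_apply_eq_geom_sum]
  by_cases hkl : k = l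
  · rw [if_pos hkl]
    subst hkl
    simp only [sub_self, zpow_zero, one_pow, Finset.sum_const, Finset.card_range, nsmul_eq_mul,
      mul_one]
    field_simp
  have hndvd : ¬ (2 * n : ℤ) ∣ (l : ℤ) - k := fun hdvd ↦ hkl <| Fin.ext <| by
    have := Int.eq_zero_of_abs_lt_dvd hdvd (abs_sub_lt_iff.mpr ⟨by omega, by omega⟩)
    omega
  have heven_iff : Even ((l : ℤ) - k) ↔ Even ((k : ℤ) - l) := by rw [← even_neg, neg_sub]
  rw [if_neg hkl, (isPrimitiveRoot_dftRoot hn).geom_sum_zpow_of_two_mul hn hndvd]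
  simp only [heven_iff]
  split_ifs
  · rw [mul_zero]
  · rw [dftRoot_zpow, show -(2 * π * I * (((k : ℤ) - l : ℤ) : ℂ)) / (2 * n)
      = 2 * π * I * (((l : ℤ) - k : ℤ) : ℂ) / (2 * n) by push_cast; ring]
    field_simp

theorem norm_Pmat_apply_le (n : ℕ) (k l : Fin (2 * n)) (hkl : k ≠ l) :
    ‖Pmat n k l‖ ≤
      (1 / 2) / (min (((k : ℤ) - (l : ℤ)).natAbs) (2 * n - ((k : ℤ) - (l : ℤ)).natAbs) : ℕ) := by
  have hn : n ≠ 0 := by rintro rfl; exact k.elim0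
  set e : ℤ := (k : ℤ) - l
  set m := min e.natAbs (2 * n - e.natAbs)
  have he : e ≠ 0 := fun h ↦ hkl <| Fin.ext <| by omega
  have hm : (0 : ℝ) < m := by norm_cast; omega
  rw [Pmat_apply, if_neg hkl]
  split_ifs with heven
  · rw [norm_zero]
    positivity
  have hsin : 2 * m / ((2 * n : ℕ) : ℝ) ≤ |Real.sin (π * e / ((2 * n : ℕ) : ℝ))| :=
    Real.two_mul_min_div_le_abs_sin (by omega)
  push_cast at hsin
  have hexp : -(2 * π * I * ((e : ℤ) : ℂ)) / (2 * n) = 2 * π * I * ((-(e / (2 * n)) : ℝ) : ℂ) := by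
    push_cast
    ring
  rw [hexp, norm_mul, norm_inv, Complex.norm_one_sub_exp_two_pi_I_mul, mul_neg, Real.sin_neg,
    abs_neg, ← mul_div_assoc, norm_div, norm_one, Complex.norm_natCast]
  calc 1 / (n : ℝ) * (2 * |Real.sin (π * e / (2 * n))|)⁻¹
      ≤ 1 / n * (2 * (2 * m / (2 * n) : ℝ))⁻¹ := by gcongr
    _ = 1 / 2 / m := by field_simp

/-- The entries of `P = U* Q U` are `1/2` on the diagonal, `0` for even nonzero `k − l`,
and `(1/n)(1 − exp(−2πi(k−l)/(2n)))⁻¹` for odd `k − l`; moreover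
`|P(k,l)| ≤ C·min(|k−l|, 2n−|k−l|)⁻¹` for `k ≠ l`, for an absolute constant `C`. -/
theorem Pmat_entries_and_decay :
    (∀ n : ℕ, 1 ≤ n → ∀ k l : Fin (2 * n),
      Pmat n k l =
        if k = l then (1 / 2 : ℂ)
        else if Even ((k : ℤ) - (l : ℤ)) then 0
        else (1 / (n : ℂ)) *
          (1 - Complex.exp (-(2 * Real.pi * Complex.I * (((k : ℤ) - (l : ℤ)) : ℤ)) /
            (2 * n)))⁻¹) ∧
    ∃ C : ℝ, ∀ n : ℕ, 1 ≤ n → ∀ k l : Fin (2 * n), k ≠ l →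
      ‖Pmat n k l‖ ≤
        C / (min (((k : ℤ) - (l : ℤ)).natAbs) (2 * n - ((k : ℤ) - (l : ℤ)).natAbs) : ℕ) :=
  ⟨fun n _ k l ↦ Pmat_apply n k l, 1 / 2, fun n _ k l hkl ↦ norm_Pmat_apply_le n k l hkl⟩
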